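/- For every integer n ≥ 3, the positive co-degree Turán number of C₅ satisfies 2·⌊n/4⌋ ≤ co⁺ex(n, C₅) ≤ (2/3)·n. -/

import Mathlib

open Finset

/-- The co-degree of a vertex set `S` in the hypergraph with edge set `E`:
the number of edges containing `S`. -/
def coDeg {n : ℕ} (E : Finset (Finset (Fin n))) (S : Finset (Fin n)) : ℕ :=
  (E.filter (fun e => S ⊆ e)).card

/-- The minimum positive co-degree `δ⁺_{r-1}` of an `r`-graph on `Fin n` with edge set `E`:
the largest `k` such that every `(r-1)`-set of vertices contained in at least one edge is
contained in at least `k` edges (i.e. the minimum of the positive co-degrees). -/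
noncomputable def minPosCoDeg (r n : ℕ) (E : Finset (Finset (Fin n))) : ℕ :=
  sInf {d : ℕ | ∃ S : Finset (Fin n), S.card = r - 1 ∧ coDeg E S = d ∧ 0 < d}

/-- `E` contains a copy of `F`: an injection of the vertices of `F` mapping
edges of `F` to edges of `E`. -/
def Contains {α β : Type*} [DecidableEq α] [DecidableEq β]
    (F : Finset (Finset α)) (E : Finset (Finset β)) : Prop :=
  ∃ f : α → β, Function.Injective f ∧ ∀ e ∈ F, e.image f ∈ E

/-- The positive co-degree Turán number `co⁺ex_r(n, F)`: the maximum of the minimum positive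
co-degree over all `F`-free `r`-graphs on `n` vertices with at least one edge. -/
noncomputable def coPlusEx {α : Type*} [DecidableEq α] (r n : ℕ) (F : Finset (Finset α)) : ℕ :=
  sSup {d : ℕ | ∃ E : Finset (Finset (Fin n)),
    (∀ e ∈ E, e.card = r) ∧ E.Nonempty ∧ ¬ Contains F E ∧ minPosCoDeg r n E = d}


def K4minus : Finset (Finset (Fin 4)) := {{0,1,2}, {0,1,3}, {0,2,3}}

def K4 : Finset (Finset (Fin 4)) := {{0,1,2}, {0,1,3}, {0,2,3}, {1,2,3}}

def F5 : Finset (Finset (Fin 5)) := {{0,1,2}, {0,1,3}, {2,3,4}}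

def F32 : Finset (Finset (Fin 5)) := {{0,1,2}, {0,3,4}, {1,3,4}, {2,3,4}}

def Fano : Finset (Finset (Fin 7)) :=
  {{0,1,2}, {2,3,4}, {0,4,5}, {1,3,5}, {0,3,6}, {1,4,6}, {2,5,6}}

def F33 : Finset (Finset (Fin 6)) :=
  {{0,1,2}, {0,3,4}, {0,3,5}, {0,4,5}, {1,3,4}, {1,3,5}, {1,4,5}, {2,3,4}, {2,3,5}, {2,4,5}}

def C5 : Finset (Finset (Fin 5)) := {{0,1,2}, {1,2,3}, {2,3,4}, {0,3,4}, {0,1,4}}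

def C5minus : Finset (Finset (Fin 5)) := {{0,1,2}, {1,2,3}, {2,3,4}, {0,3,4}}

def K222 : Finset (Finset (Fin 6)) :=
  {{0,2,4}, {0,2,5}, {0,3,4}, {0,3,5}, {1,2,4}, {1,2,5}, {1,3,4}, {1,3,5}}

/-- `J k`: the 3-graph on `k+1` vertices whose edges are all triples containing the
distinguished vertex `0`. -/
def Jgraph (k : ℕ) : Finset (Finset (Fin (k+1))) :=
  (Finset.univ.powersetCard 3).filter (fun e => (0 : Fin (k+1)) ∈ e)

/-- `E` is (isomorphic to) the complete balanced `k`-partite 3-graph on `n` vertices: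
there is a partition of the vertices into `k` classes whose sizes differ by at most one,
such that the edges are exactly the triples of vertices in three pairwise distinct classes. -/
def IsCompleteBalancedMultipartite (n k : ℕ) (E : Finset (Finset (Fin n))) : Prop :=
  ∃ f : Fin n → Fin k,
    (∀ i j : Fin k, (Finset.univ.filter (fun v => f v = i)).card ≤
      (Finset.univ.filter (fun v => f v = j)).card + 1) ∧
    ∀ e : Finset (Fin n), e ∈ E ↔ (e.card = 3 ∧ (e.image f).card = 3)

/-- The unique (6,3,2)-design `H₆`. -/
def H6 : Finset (Finset (Fin 6)) :=
  {{0,1,2}, {0,1,3}, {2,3,4}, {2,3,5}, {0,4,5}, {1,4,5}, {0,2,4}, {0,3,5}, {1,2,5}, {1,3,4}}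

/-- `E` is (isomorphic to) a balanced blow-up of `H₆` on `n` vertices: the vertices are
partitioned into six classes of equal size, and the edges are exactly the triples whose
three vertices lie in classes forming an edge of `H₆`. -/
def IsBalancedH6Blowup (n : ℕ) (E : Finset (Finset (Fin n))) : Prop :=
  ∃ f : Fin n → Fin 6,
    (∀ i j : Fin 6, (Finset.univ.filter (fun v => f v = i)).card =
      (Finset.univ.filter (fun v => f v = j)).card) ∧
    ∀ e : Finset (Fin n), e ∈ E ↔ (e.card = 3 ∧ e.image f ∈ H6)


/-!
Upper bound: if `δ₂⁺(H) > 2n/3`, then any three links of pairs covered by edges share a vertex.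
Starting from an edge `abc`, a common vertex `d` of the links of `ab` and `bc` gives edges `abd`
and `bcd`; a common vertex `x` of the links of `ab`, `ac` and `cd` gives edges `abx`, `acx` and
`cdx`. Then `b a x c d` is a tight cycle, i.e. a copy of `C₅`.

Lower bound: the complete 4-partite 3-graph whose parts are the residue classes mod 4 is
`C₅`-free, because any two vertices of `C₅` lie in a common edge and would therefore need five
distinct parts. A pair covered by an edge meets two parts, and its co-degree is the size of the
other two parts, at least `2⌊n/4⌋`.
-/

open Function

section Link

variable {n : ℕ}

def link (E : Finset (Finset (Fin n))) (S : Finset (Fin n)) : Finset (Fin n) :=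
  {v | v ∉ S ∧ insert v S ∈ E}

@[simp]
lemma mem_link {E : Finset (Finset (Fin n))} {S : Finset (Fin n)} {v : Fin n} :
    v ∈ link E S ↔ v ∉ S ∧ insert v S ∈ E := by
  simp [link]

lemma coDeg_eq_card_link {E : Finset (Finset (Fin n))} {S : Finset (Fin n)} {r : ℕ}
    (hE : ∀ e ∈ E, #e = r) (hS : #S + 1 = r) : coDeg E S = #(link E S) := by
  symm
  refine card_nbij (fun v => insert v S) (fun v hv => ?_) (fun v hv w _ hvw => ?_) (fun e he => ?_)
  · rw [mem_coe, mem_link] at hv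
    exact mem_filter.2 ⟨hv.2, subset_insert _ _⟩
  · rw [mem_coe, mem_link] at hv
    exact (insert_inj hv.1).1 hvw
  · rw [mem_coe, mem_filter] at he
    obtain ⟨v, hvS, rfl⟩ := exists_eq_insert_iff.2 ⟨he.2, hS.trans (hE e he.1).symm⟩
    exact ⟨v, by simpa using ⟨hvS, he.1⟩, rfl⟩

lemma coDeg_pos_of_subset {E : Finset (Finset (Fin n))} {S e : Finset (Fin n)} (he : e ∈ E)
    (hS : S ⊆ e) : 0 < coDeg E S :=
  card_pos.2 ⟨e, mem_filter.2 ⟨he, hS⟩⟩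

end Link

section MinPosCoDeg

variable {n r : ℕ} {E : Finset (Finset (Fin n))}

lemma minPosCoDeg_le_coDeg {S : Finset (Fin n)} (hS : #S = r - 1) (hpos : 0 < coDeg E S) :
    minPosCoDeg r n E ≤ coDeg E S :=
  Nat.sInf_le ⟨S, hS, rfl, hpos⟩

lemma le_minPosCoDeg {m : ℕ} (hE : ∀ e ∈ E, #e = r) (hne : E.Nonempty)
    (h : ∀ S : Finset (Fin n), #S = r - 1 → 0 < coDeg E S → m ≤ coDeg E S) :
    m ≤ minPosCoDeg r n E := by
  obtain ⟨e, he⟩ := hne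
  obtain ⟨S, hSe, hS⟩ := exists_subset_card_eq (show r - 1 ≤ #e by rw [hE e he]; omega)
  refine le_csInf ⟨_, S, hS, rfl, coDeg_pos_of_subset he hSe⟩ ?_
  rintro _ ⟨S, hS, rfl, hpos⟩
  exact h S hS hpos

lemma minPosCoDeg_le_card : minPosCoDeg r n E ≤ #E := by
  rcases Set.eq_empty_or_nonempty
    {d : ℕ | ∃ S : Finset (Fin n), #S = r - 1 ∧ coDeg E S = d ∧ 0 < d} with h | h
  · simp [minPosCoDeg, h]
  · obtain ⟨S, -, hS, -⟩ := Nat.sInf_mem h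
    rw [minPosCoDeg, ← hS]
    exact card_filter_le _ _

lemma minPosCoDeg_le_card_link (hE : ∀ e ∈ E, #e = 3) {e : Finset (Fin n)} {x y : Fin n}
    (he : e ∈ E) (hx : x ∈ e) (hy : y ∈ e) (hxy : x ≠ y) :
    minPosCoDeg 3 n E ≤ #(link E {x, y}) := by
  rw [← coDeg_eq_card_link hE (by rw [card_pair hxy])]
  exact minPosCoDeg_le_coDeg (card_pair hxy)
    (coDeg_pos_of_subset he (insert_subset hx (singleton_subset_iff.2 hy)))

end MinPosCoDeg

section CoPlusEx

variable {α : Type*} [DecidableEq α] {n r : ℕ} {F : Finset (Finset α)}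

lemma le_coPlusEx {E : Finset (Finset (Fin n))} (hE : ∀ e ∈ E, #e = r) (hne : E.Nonempty)
    (hF : ¬ Contains F E) : minPosCoDeg r n E ≤ coPlusEx r n F := by
  refine le_csSup ⟨2 ^ n, ?_⟩ ⟨E, hE, hne, hF, rfl⟩
  rintro _ ⟨E', -, -, -, rfl⟩
  simpa using minPosCoDeg_le_card.trans (card_le_univ E')

lemma coPlusEx_le {m : ℕ} (h : ∀ E : Finset (Finset (Fin n)),
    (∀ e ∈ E, #e = r) → E.Nonempty → ¬ Contains F E → minPosCoDeg r n E ≤ m) :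
    coPlusEx r n F ≤ m :=
  csSup_le' <| by
    rintro _ ⟨E, hE, hne, hF, rfl⟩
    exact h E hE hne hF

end CoPlusEx

section C5

lemma exists_mem_C5_mem_and_mem : ∀ i j : Fin 5, ∃ e ∈ C5, i ∈ e ∧ j ∈ e := by
  decide

lemma injective_of_card_image_C5 {β : Type*} [DecidableEq β] {f : Fin 5 → β}
    (h : ∀ e ∈ C5, #(e.image f) = 3) : Injective f := by
  intro i j hij
  obtain ⟨e, he, hi, hj⟩ := exists_mem_C5_mem_and_mem i j
  have hcard : ∀ e ∈ C5, #e = 3 := by decide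
  exact card_image_iff.1 ((h e he).trans (hcard e he).symm) hi hj hij

lemma contains_C5_of_cycle {β : Type*} [DecidableEq β] {E : Finset (Finset β)}
    (hE : ∀ e ∈ E, #e = 3) {v₀ v₁ v₂ v₃ v₄ : β} (h₀ : {v₀, v₁, v₂} ∈ E)
    (h₁ : {v₁, v₂, v₃} ∈ E) (h₂ : {v₂, v₃, v₄} ∈ E) (h₃ : {v₀, v₃, v₄} ∈ E)
    (h₄ : {v₀, v₁, v₄} ∈ E) : Contains C5 E := by
  have hf : ∀ e ∈ C5, e.image ![v₀, v₁, v₂, v₃, v₄] ∈ E := by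
    simp [C5, h₀, h₁, h₂, h₃, h₄]
  exact ⟨_, injective_of_card_image_C5 fun e he => hE _ (hf e he), hf⟩

end C5

lemma exists_mem_of_two_mul_card_lt {β : Type*} [Fintype β] [DecidableEq β] {A B C : Finset β}
    (h : 2 * Fintype.card β < #A + #B + #C) : ∃ v ∈ A, v ∈ B ∧ v ∈ C := by
  have hAB := card_union_add_card_inter A B
  have hABC := card_union_add_card_inter (A ∩ B) C
  have := card_le_univ (A ∪ B)
  have := card_le_univ (A ∩ B ∪ C)
  obtain ⟨v, hv⟩ : (A ∩ B ∩ C).Nonempty := card_pos.1 (by omega)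
  simp only [mem_inter] at hv
  exact ⟨v, hv.1.1, hv.1.2, hv.2⟩

lemma three_mul_minPosCoDeg_le_of_not_contains_C5 {n : ℕ} {E : Finset (Finset (Fin n))}
    (hE : ∀ e ∈ E, #e = 3) (hne : E.Nonempty) (hF : ¬ Contains C5 E) :
    3 * minPosCoDeg 3 n E ≤ 2 * n := by
  by_contra! hδ
  have meet {A B C : Finset (Fin n)} (hA : minPosCoDeg 3 n E ≤ #A)
      (hB : minPosCoDeg 3 n E ≤ #B) (hC : minPosCoDeg 3 n E ≤ #C) : ∃ v ∈ A, v ∈ B ∧ v ∈ C :=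
    exists_mem_of_two_mul_card_lt (by rw [Fintype.card_fin]; omega)
  obtain ⟨e₀, he₀⟩ := hne
  obtain ⟨a, b, c, hab, hac, hbc, rfl⟩ := card_eq_three.1 (hE _ he₀)
  have hL_ab := minPosCoDeg_le_card_link hE he₀ (by simp) (by simp) hab
  have hL_ac := minPosCoDeg_le_card_link hE he₀ (by simp) (by simp) hac
  have hL_bc := minPosCoDeg_le_card_link hE he₀ (by simp) (by simp) hbc
  obtain ⟨d, hd_ab, -, hd_bc⟩ := meet hL_ab hL_ac hL_bc
  rw [mem_link] at hd_ab hd_bc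
  have hcd : c ≠ d := by rintro rfl; simp at hd_bc
  obtain ⟨x, hx_ab, hx_ac, hx_cd⟩ :=
    meet hL_ab hL_ac (minPosCoDeg_le_card_link hE hd_bc.2 (by simp) (by simp) hcd)
  rw [mem_link] at hx_ab hx_ac hx_cd
  have mem_of_eq {s t : Finset (Fin n)} (hs : s ∈ E) (hst : s = t := by ext; simp; tauto) :
      t ∈ E := hst ▸ hs
  exact hF <| contains_C5_of_cycle hE (v₀ := b) (v₁ := a) (v₂ := x) (v₃ := c) (v₄ := d)
    (mem_of_eq hx_ab.2) (mem_of_eq hx_ac.2) hx_cd.2 (mem_of_eq hd_bc.2) (mem_of_eq hd_ab.2)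

section CompletePartite

variable {n : ℕ} {κ : Type*} [DecidableEq κ] (g : Fin n → κ)

def completePartite : Finset (Finset (Fin n)) :=
  {e | #e = 3 ∧ #(e.image g) = 3}

variable {g}

@[simp]
lemma mem_completePartite {e : Finset (Fin n)} :
    e ∈ completePartite g ↔ #e = 3 ∧ #(e.image g) = 3 := by
  simp [completePartite]

lemma insert_mem_completePartite {a b c : Fin n} (hab : g a ≠ g b) (hac : g a ≠ g c)
    (hbc : g b ≠ g c) : {a, b, c} ∈ completePartite g := by
  rw [mem_completePartite, image_insert, image_insert, image_singleton]
  exact ⟨card_eq_three.2 ⟨a, b, c, ne_of_apply_ne g hab, ne_of_apply_ne g hac,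
    ne_of_apply_ne g hbc, rfl⟩, card_eq_three.2 ⟨_, _, _, hab, hac, hbc, rfl⟩⟩

lemma not_contains_C5_completePartite [Fintype κ] (hκ : Fintype.card κ ≤ 4) :
    ¬ Contains C5 (completePartite g) := by
  rintro ⟨f, -, hf⟩
  have : Injective (g ∘ f) := injective_of_card_image_C5 fun e he => by
    rw [← image_image]
    exact (mem_completePartite.1 (hf e he)).2
  simpa using (Fintype.card_le_of_injective _ this).trans hκ

variable [Fintype κ]

lemma completePartite_nonempty (hg : Surjective g) (hκ : 3 ≤ Fintype.card κ) :
    (completePartite g).Nonempty := by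
  obtain ⟨x, y, z, hxy, hxz, hyz⟩ := Fintype.two_lt_card_iff.1 hκ
  obtain ⟨a, rfl⟩ := hg x
  obtain ⟨b, rfl⟩ := hg y
  obtain ⟨c, rfl⟩ := hg z
  exact ⟨_, insert_mem_completePartite hxy hxz hyz⟩

lemma mul_le_card_link_completePartite {m : ℕ} (hg : ∀ c, m ≤ #{v | g v = c}) {a b : Fin n}
    (hab : g a ≠ g b) : (Fintype.card κ - 2) * m ≤ #(link (completePartite g) {a, b}) :=
  calc (Fintype.card κ - 2) * m = #({g a, g b}ᶜ : Finset κ) • m := by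
        rw [card_compl, card_pair hab, smul_eq_mul]
    _ ≤ ∑ c ∈ {g a, g b}ᶜ, #{v | g v = c} := card_nsmul_le_sum _ _ _ fun c _ => hg c
    _ = #{v | g v ∈ ({g a, g b}ᶜ : Finset κ)} := sum_card_fiberwise_eq_card_filter _ _ _
    _ ≤ #(link (completePartite g) {a, b}) := card_le_card fun v hv => by
        simp only [mem_filter, mem_compl, mem_insert, mem_singleton, not_or] at hv
        rw [mem_link]
        refine ⟨?_, insert_mem_completePartite hv.2.1 hv.2.2 hab⟩
        rw [mem_insert, mem_singleton]
        rintro (rfl | rfl) <;> simp at hv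

lemma le_minPosCoDeg_completePartite {m : ℕ} (hg : ∀ c, m ≤ #{v | g v = c})
    (hne : (completePartite g).Nonempty) :
    (Fintype.card κ - 2) * m ≤ minPosCoDeg 3 n (completePartite g) := by
  have hE : ∀ e ∈ completePartite g, #e = 3 := fun e he => (mem_completePartite.1 he).1
  refine le_minPosCoDeg hE hne fun S hS hpos => ?_
  obtain ⟨a, b, hab, rfl⟩ := card_eq_two.1 hS
  obtain ⟨e, he⟩ := card_pos.1 hpos
  obtain ⟨⟨he3, hge3⟩, habe⟩ := mem_filter.1 he |>.imp_left mem_completePartite.1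
  have hgab : g a ≠ g b := fun h =>
    hab (card_image_iff.1 (hge3.trans he3.symm) (habe (by simp)) (habe (by simp)) h)
  rw [coDeg_eq_card_link hE (by rw [card_pair hab])]
  exact mul_le_card_link_completePartite hg hgab

end CompletePartite

lemma card_filter_fin_eq_count (n : ℕ) (p : ℕ → Prop) [DecidablePred p] :
    #{v : Fin n | p v} = Nat.count p n := by
  rw [Nat.count_eq_card_filter_range, ← Nat.Iio_eq_range, ← Fin.map_valEmbedding_univ,
    filter_map, card_map]
  rfl

lemma div_le_card_filter_ofNat_eq (n r : ℕ) [NeZero r] (c : Fin r) :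
    n / r ≤ #{v : Fin n | Fin.ofNat r v = c} := by
  have : #{v : Fin n | Fin.ofNat r v = c} = Nat.count (· ≡ c [MOD r]) n := by
    rw [← card_filter_fin_eq_count]
    simp [Fin.ext_iff, Nat.ModEq, Nat.mod_eq_of_lt c.isLt]
  rw [this, Nat.count_modEq_card n (NeZero.pos r)]
  exact Nat.le_add_right _ _

theorem coPlusEx_C5_general (n : ℕ) :
    2 * (n / 4) ≤ coPlusEx 3 n C5 ∧ (coPlusEx 3 n C5 : ℝ) ≤ 2 / 3 * n := by
  constructor
  · rcases Nat.eq_zero_or_pos (n / 4) with h | h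
    · simp [h]
    let g : Fin n → Fin 4 := fun v => Fin.ofNat 4 v
    have hg : ∀ c, n / 4 ≤ #{v | g v = c} := div_le_card_filter_ofNat_eq n 4
    have hne : (completePartite g).Nonempty := completePartite_nonempty (fun c => by
      obtain ⟨v, hv⟩ := card_pos.1 (h.trans_le (hg c))
      exact ⟨v, (mem_filter.1 hv).2⟩) (by simp)
    calc 2 * (n / 4) = (Fintype.card (Fin 4) - 2) * (n / 4) := by simp
      _ ≤ minPosCoDeg 3 n (completePartite g) := le_minPosCoDeg_completePartite hg hne
      _ ≤ coPlusEx 3 n C5 := le_coPlusEx (fun e he => (mem_completePartite.1 he).1) hne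
        (not_contains_C5_completePartite (by simp))
  · have h : coPlusEx 3 n C5 ≤ 2 * n / 3 := coPlusEx_le fun E hE hne hF =>
      (Nat.le_div_iff_mul_le (by norm_num)).2
        (by linarith [three_mul_minPosCoDeg_le_of_not_contains_C5 hE hne hF])
    calc (coPlusEx 3 n C5 : ℝ) ≤ ((2 * n / 3 : ℕ) : ℝ) := by exact_mod_cast h
      _ ≤ ((2 * n : ℕ) : ℝ) / (3 : ℕ) := Nat.cast_div_le
      _ = 2 / 3 * n := by push_cast; ring

/-- For every `n ≥ 3`, `2·⌊n/4⌋ ≤ co⁺ex(n, C₅) ≤ (2/3)·n`. -/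
theorem coPlusEx_C5 (n : ℕ) (hn : 3 ≤ n) :
    2 * (n / 4) ≤ coPlusEx 3 n C5 ∧ (coPlusEx 3 n C5 : ℝ) ≤ 2 / 3 * n :=
  coPlusEx_C5_general n
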